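/- arXiv:2404.07810 — 4 statements merged into one kernel-verified Lean document; each statement's English description precedes it below -/
import Mathlib

section
/- The optimality gap satisfies OG ≤ Σ_{k=1}^K Σ_{i ∈ C_k} γ_i ( |F(z*_ζ, ξ_i) − F(z*_ζ, ζ_k)| + |F(z*_ξ, ξ_i) − F(z*_ξ, ζ_k)| ), where z*_ξ minimizes F(·, ξ) over Z, z*_ζ minimizes F(·, ζ) over Z, and OG := F(z*_ζ, ξ) − F(z*_ξ, ξ). -/
/-! Split the gap through the reduced objective:
`F(z*_ζ, ξ) − F(z*_ξ, ξ) = [F(z*_ζ, ξ) − F(z*_ζ, ζ)] + [F(z*_ζ, ζ) − F(z*_ξ, ζ)] + [F(z*_ξ, ζ) − F(z*_ξ, ξ)]`.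
The middle bracket is `≤ 0` because `z*_ζ` minimises the reduced objective, and for any fixed
decision, clustering the scenarios shows that the original and the reduced objective differ by at
most `Σ_k Σ_{i ∈ C_k} γ_i |F(z, ξ_i) − F(z, ζ_k)|`. -/

open Finset

lemma sub_le_abs_sub_add_abs_sub_of_le {a b a' b' : ℝ} (h : a' ≤ b') :
    a - b ≤ |a - a'| + |b - b'| := by
  have ha := le_abs_self (a - a')
  have hb := neg_abs_le (b - b')
  linarith

lemma abs_sum_mul_sub_sum_clusterWeight_mul_le {ι κ : Type*} [Fintype ι] [Fintype κ]
    [DecidableEq ι] (γ : ι → ℝ) (hγ : ∀ i, 0 ≤ γ i) (C : κ → Finset ι)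
    (hdisj : (Set.univ : Set κ).PairwiseDisjoint C) (hcover : univ.biUnion C = univ)
    (x : ι → ℝ) (y : κ → ℝ) :
    |∑ i, γ i * x i - ∑ k, (∑ i ∈ C k, γ i) * y k|
      ≤ ∑ k, ∑ i ∈ C k, γ i * |x i - y k| := by
  have hsplit : ∑ i, γ i * x i - ∑ k, (∑ i ∈ C k, γ i) * y k
      = ∑ k, ∑ i ∈ C k, γ i * (x i - y k) := by
    rw [← hcover, sum_biUnion (by simpa using hdisj), ← sum_sub_distrib]
    simp only [sum_mul, ← sum_sub_distrib, mul_sub]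
  calc |∑ i, γ i * x i - ∑ k, (∑ i ∈ C k, γ i) * y k|
      = |∑ k, ∑ i ∈ C k, γ i * (x i - y k)| := by rw [hsplit]
    _ ≤ ∑ k, |∑ i ∈ C k, γ i * (x i - y k)| := abs_sum_le_sum_abs _ _
    _ ≤ ∑ k, ∑ i ∈ C k, |γ i * (x i - y k)| :=
        sum_le_sum fun k _ => abs_sum_le_sum_abs _ _
    _ = ∑ k, ∑ i ∈ C k, γ i * |x i - y k| := by
        simp only [abs_mul, abs_of_nonneg (hγ _)]

theorem sr_optimality_gap_abs_bound_general {D S : Type*}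
    (Z : Set D) (F : D → S → ℝ)
    {N K : ℕ} (ξ : Fin N → S) (γ : Fin N → ℝ)
    (hγ : ∀ i, 0 < γ i)
    (C : Fin K → Finset (Fin N))
    (hCdisj : ∀ k l, k ≠ l → Disjoint (C k) (C l))
    (hCcover : Finset.univ.biUnion C = Finset.univ)
    (ζ : Fin K → S)
    (zξ : D) (hzξ : zξ ∈ Z)
    (zζ : D)
    (hoptζ : ∀ z ∈ Z,
      ∑ k, (∑ i ∈ C k, γ i) * F zζ (ζ k) ≤ ∑ k, (∑ i ∈ C k, γ i) * F z (ζ k)) :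
    (∑ i, γ i * F zζ (ξ i)) - (∑ i, γ i * F zξ (ξ i))
      ≤ ∑ k, ∑ i ∈ C k, γ i *
          (|F zζ (ξ i) - F zζ (ζ k)| + |F zξ (ξ i) - F zξ (ζ k)|) := by
  have hclusters (z : D) := abs_sum_mul_sub_sum_clusterWeight_mul_le γ (fun i => (hγ i).le) C
    (fun k _ l _ hkl => hCdisj k l hkl) hCcover (fun i => F z (ξ i)) (fun k => F z (ζ k))
  calc (∑ i, γ i * F zζ (ξ i)) - (∑ i, γ i * F zξ (ξ i))
      ≤ |∑ i, γ i * F zζ (ξ i) - ∑ k, (∑ i ∈ C k, γ i) * F zζ (ζ k)|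
        + |∑ i, γ i * F zξ (ξ i) - ∑ k, (∑ i ∈ C k, γ i) * F zξ (ζ k)| :=
        sub_le_abs_sub_add_abs_sub_of_le (hoptζ zξ hzξ)
    _ ≤ ∑ k, ∑ i ∈ C k, γ i * |F zζ (ξ i) - F zζ (ζ k)|
        + ∑ k, ∑ i ∈ C k, γ i * |F zξ (ξ i) - F zξ (ζ k)| :=
        add_le_add (hclusters zζ) (hclusters zξ)
    _ = _ := by simp only [mul_add, sum_add_distrib]

/-- The optimality gap satisfies
`OG ≤ Σ_k Σ_{i ∈ C_k} γ_i (|F(z*_ζ, ξ_i) − F(z*_ζ, ζ_k)| + |F(z*_ξ, ξ_i) − F(z*_ξ, ζ_k)|)`. -/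
theorem sr_optimality_gap_abs_bound {D S : Type*} [AddCommGroup D] [Module ℝ D]
    (Z : Set D) (hZ : Z.Nonempty) (F : D → S → ℝ)
    {N K : ℕ} (ξ : Fin N → S) (γ : Fin N → ℝ)
    (hγ : ∀ i, 0 < γ i) (hγsum : ∑ i, γ i = 1)
    (C : Fin K → Finset (Fin N))
    (hCne : ∀ k, (C k).Nonempty)
    (hCdisj : ∀ k l, k ≠ l → Disjoint (C k) (C l))
    (hCcover : Finset.univ.biUnion C = Finset.univ)
    (ζ : Fin K → S)
    (zξ : D) (hzξ : zξ ∈ Z)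
    (hoptξ : ∀ z ∈ Z, ∑ i, γ i * F zξ (ξ i) ≤ ∑ i, γ i * F z (ξ i))
    (zζ : D) (hzζ : zζ ∈ Z)
    (hoptζ : ∀ z ∈ Z,
      ∑ k, (∑ i ∈ C k, γ i) * F zζ (ζ k) ≤ ∑ k, (∑ i ∈ C k, γ i) * F z (ζ k)) :
    (∑ i, γ i * F zζ (ξ i)) - (∑ i, γ i * F zξ (ξ i))
      ≤ ∑ k, ∑ i ∈ C k, γ i *
          (|F zζ (ξ i) - F zζ (ζ k)| + |F zξ (ξ i) - F zξ (ζ k)|) :=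
  sr_optimality_gap_abs_bound_general Z F ξ γ hγ C hCdisj hCcover ζ zξ hzξ zζ hoptζ
end

section
/- Suppose there exist functions h : ℝ → ℝ and d : S × S → ℝ such that for every z ∈ Z and every pair of scenarios ξ_i, ζ_k appearing in the problem, |F(z, ξ_i) − F(z, ζ_k)| ≤ h(‖z‖) · d(ξ_i, ζ_k). Then the optimality gap satisfies OG ≤ (h(‖z*_ξ‖) + h(‖z*_ζ‖)) · Σ_{k=1}^K Σ_{i ∈ C_k} γ_i d(ξ_i, ζ_k). -/
/-! Regrouping the original objective along the clusters shows that, at any feasible `z`, the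
original and reduced objectives differ by at most `h ‖z‖ · Σ_k Σ_{i ∈ C_k} γ_i d(ξ_i, ζ_k)`.
Since `z*_ζ` minimises the reduced objective, passing from the original objective to the reduced
one at `z*_ζ` and back at `z*_ξ` costs at most the sum of these two errors. -/

open Finset

section Clustering

variable {ι κ : Type*} [Fintype ι] [Fintype κ] [DecidableEq ι] {C : κ → Finset ι}

theorem Finset.sum_univ_eq_sum_sum_of_partition {M : Type*} [AddCommMonoid M]
    (hdisj : ∀ k l, k ≠ l → Disjoint (C k) (C l)) (hcover : univ.biUnion C = univ)
    (f : ι → M) : ∑ i, f i = ∑ k, ∑ i ∈ C k, f i := by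
  rw [← hcover, sum_biUnion fun k _ l _ hkl => hdisj k l hkl]

theorem sum_mul_sub_sum_cluster_mul_eq
    (hdisj : ∀ k l, k ≠ l → Disjoint (C k) (C l)) (hcover : univ.biUnion C = univ)
    (γ u : ι → ℝ) (v : κ → ℝ) :
    ∑ i, γ i * u i - ∑ k, (∑ i ∈ C k, γ i) * v k = ∑ k, ∑ i ∈ C k, γ i * (u i - v k) := by
  simp only [Finset.sum_univ_eq_sum_sum_of_partition hdisj hcover, sum_mul, mul_sub,
    sum_sub_distrib]

theorem abs_sum_mul_sub_sum_cluster_mul_le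
    (hdisj : ∀ k l, k ≠ l → Disjoint (C k) (C l)) (hcover : univ.biUnion C = univ)
    {γ u : ι → ℝ} {v : κ → ℝ} (hγ : ∀ i, 0 ≤ γ i) {L : ℝ} {e : ι → κ → ℝ}
    (huv : ∀ k, ∀ i ∈ C k, |u i - v k| ≤ L * e i k) :
    |∑ i, γ i * u i - ∑ k, (∑ i ∈ C k, γ i) * v k| ≤ L * ∑ k, ∑ i ∈ C k, γ i * e i k := by
  rw [sum_mul_sub_sum_cluster_mul_eq hdisj hcover, mul_sum]
  refine (abs_sum_le_sum_abs _ _).trans (sum_le_sum fun k _ => ?_)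
  rw [mul_sum]
  refine (abs_sum_le_sum_abs _ _).trans (sum_le_sum fun i hi => ?_)
  calc |γ i * (u i - v k)| = γ i * |u i - v k| := by rw [abs_mul, abs_of_nonneg (hγ i)]
    _ ≤ γ i * (L * e i k) := mul_le_mul_of_nonneg_left (huv k i hi) (hγ i)
    _ = L * (γ i * e i k) := mul_left_comm _ _ _

end Clustering

theorem sub_le_add_of_abs_sub_le_of_le {α : Type*} {f g : α → ℝ} {x y : α} {εx εy : ℝ}
    (hx : |f x - g x| ≤ εx) (hy : |f y - g y| ≤ εy) (hg : g y ≤ g x) :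
    f y - f x ≤ εx + εy := by
  linarith [(abs_le.mp hx).1, (abs_le.mp hy).2]

theorem sr_optimality_gap_lipschitz_bound_general {D S : Type*}
    [NormedAddCommGroup D] [NormedSpace ℝ D]
    (Z : Set D) (F : D → S → ℝ)
    {N K : ℕ} (ξ : Fin N → S) (γ : Fin N → ℝ)
    (hγ : ∀ i, 0 < γ i)
    (C : Fin K → Finset (Fin N))
    (hCdisj : ∀ k l, k ≠ l → Disjoint (C k) (C l))
    (hCcover : Finset.univ.biUnion C = Finset.univ)
    (ζ : Fin K → S)
    (zξ : D) (hzξ : zξ ∈ Z)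
    (zζ : D) (hzζ : zζ ∈ Z)
    (hoptζ : ∀ z ∈ Z,
      ∑ k, (∑ i ∈ C k, γ i) * F zζ (ζ k) ≤ ∑ k, (∑ i ∈ C k, γ i) * F z (ζ k))
    (h : ℝ → ℝ) (d : S → S → ℝ)
    (hbound : ∀ z ∈ Z, ∀ (i : Fin N) (k : Fin K),
      |F z (ξ i) - F z (ζ k)| ≤ h ‖z‖ * d (ξ i) (ζ k)) :
    (∑ i, γ i * F zζ (ξ i)) - (∑ i, γ i * F zξ (ξ i))
      ≤ (h ‖zξ‖ + h ‖zζ‖) * ∑ k, ∑ i ∈ C k, γ i * d (ξ i) (ζ k) := by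
  have reduction_error : ∀ z ∈ Z,
      |∑ i, γ i * F z (ξ i) - ∑ k, (∑ i ∈ C k, γ i) * F z (ζ k)|
        ≤ h ‖z‖ * ∑ k, ∑ i ∈ C k, γ i * d (ξ i) (ζ k) := fun z hz =>
    abs_sum_mul_sub_sum_cluster_mul_le hCdisj hCcover (fun i => (hγ i).le)
      fun k i _ => hbound z hz i k
  rw [add_mul]
  exact sub_le_add_of_abs_sub_le_of_le (f := fun z => ∑ i, γ i * F z (ξ i))
    (g := fun z => ∑ k, (∑ i ∈ C k, γ i) * F z (ζ k))
    (reduction_error zξ hzξ) (reduction_error zζ hzζ) (hoptζ zξ hzξ)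

/-- If `|F(z, ξ_i) − F(z, ζ_k)| ≤ h(‖z‖) · d(ξ_i, ζ_k)` for all
feasible `z` and all scenario pairs, then
`OG ≤ (h(‖z*_ξ‖) + h(‖z*_ζ‖)) · Σ_k Σ_{i ∈ C_k} γ_i d(ξ_i, ζ_k)`. -/
theorem sr_optimality_gap_lipschitz_bound {D S : Type*}
    [NormedAddCommGroup D] [NormedSpace ℝ D]
    (Z : Set D) (hZ : Z.Nonempty) (F : D → S → ℝ)
    {N K : ℕ} (ξ : Fin N → S) (γ : Fin N → ℝ)
    (hγ : ∀ i, 0 < γ i) (hγsum : ∑ i, γ i = 1)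
    (C : Fin K → Finset (Fin N))
    (hCne : ∀ k, (C k).Nonempty)
    (hCdisj : ∀ k l, k ≠ l → Disjoint (C k) (C l))
    (hCcover : Finset.univ.biUnion C = Finset.univ)
    (ζ : Fin K → S)
    (zξ : D) (hzξ : zξ ∈ Z)
    (hoptξ : ∀ z ∈ Z, ∑ i, γ i * F zξ (ξ i) ≤ ∑ i, γ i * F z (ξ i))
    (zζ : D) (hzζ : zζ ∈ Z)
    (hoptζ : ∀ z ∈ Z,
      ∑ k, (∑ i ∈ C k, γ i) * F zζ (ζ k) ≤ ∑ k, (∑ i ∈ C k, γ i) * F z (ζ k))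
    (h : ℝ → ℝ) (d : S → S → ℝ)
    (hd : ∀ s s' : S, 0 ≤ d s s')
    (hbound : ∀ z ∈ Z, ∀ (i : Fin N) (k : Fin K),
      |F z (ξ i) - F z (ζ k)| ≤ h ‖z‖ * d (ξ i) (ζ k)) :
    (∑ i, γ i * F zζ (ξ i)) - (∑ i, γ i * F zξ (ξ i))
      ≤ (h ‖zξ‖ + h ‖zζ‖) * ∑ k, ∑ i ∈ C k, γ i * d (ξ i) (ζ k) :=
  sr_optimality_gap_lipschitz_bound_general Z F ξ γ hγ C hCdisj hCcover ζ zξ hzξ zζ hzζ hoptζ h d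
    hbound
end

section
/- Suppose h : ℝ → ℝ is nondecreasing, every feasible decision satisfies ‖z‖ ≤ M, and for every z ∈ Z and every pair of scenarios ξ_i, ζ_k appearing in the problem, |F(z, ξ_i) − F(z, ζ_k)| ≤ h(‖z‖) · d(ξ_i, ζ_k) with d nonnegative. Then the optimality gap satisfies OG ≤ 2 h(M) · Σ_{k=1}^K Σ_{i ∈ C_k} γ_i d(ξ_i, ζ_k); in particular, minimizing the weighted sum of within-cluster distances Σ_{k} Σ_{i ∈ C_k} γ_i d(ξ_i, ζ_k) minimizes this upper bound on OG. -/
/-!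
Write `A z = Σᵢ γᵢ F(z, ξᵢ)` and `B z = Σₖ ωₖ F(z, ζₖ)`. Splitting `A` along the clusters and
comparing each `F(z, ξᵢ)` with its representative `F(z, ζₖ)` shows that `A` and `B` differ by at
most `ε := h(M) · Σₖ Σ_{i ∈ Cₖ} γᵢ d(ξᵢ, ζₖ)` at every feasible decision. Since `z*_ζ` minimizes `B`,
`A z*_ζ ≤ B z*_ζ + ε ≤ B z*_ξ + ε ≤ A z*_ξ + 2ε`.
-/

open Finset

theorem Finset.sum_eq_sum_sum_of_partition {ι α M : Type*} [Fintype ι] [Fintype α]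
    [DecidableEq α] [AddCommMonoid M] {C : ι → Finset α}
    (hdisj : ∀ k l, k ≠ l → Disjoint (C k) (C l)) (hcover : univ.biUnion C = univ)
    (g : α → M) : ∑ i, g i = ∑ k, ∑ i ∈ C k, g i := by
  rw [← sum_biUnion fun k _ l _ hkl => hdisj k l hkl, hcover]

theorem abs_sum_mul_sub_sum_mul_le {α : Type*} (s : Finset α) {γ a : α → ℝ} (b : ℝ)
    (hγ : ∀ i ∈ s, 0 ≤ γ i) :
    |∑ i ∈ s, γ i * a i - (∑ i ∈ s, γ i) * b| ≤ ∑ i ∈ s, γ i * |a i - b| := by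
  rw [sum_mul, ← sum_sub_distrib]
  refine (abs_sum_le_sum_abs _ _).trans (sum_le_sum fun i hi => ?_)
  rw [← mul_sub, abs_mul, abs_of_nonneg (hγ i hi)]

theorem abs_weighted_sum_sub_clustered_le {ι α : Type*} [Fintype ι] [Fintype α] [DecidableEq α]
    {γ a : α → ℝ} {b : ι → ℝ} {δ : α → ι → ℝ} {L : ℝ} {C : ι → Finset α}
    (hγ : ∀ i, 0 ≤ γ i) (hdisj : ∀ k l, k ≠ l → Disjoint (C k) (C l))
    (hcover : univ.biUnion C = univ) (hab : ∀ i k, |a i - b k| ≤ L * δ i k) :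
    |∑ i, γ i * a i - ∑ k, (∑ i ∈ C k, γ i) * b k| ≤ L * ∑ k, ∑ i ∈ C k, γ i * δ i k := by
  rw [sum_eq_sum_sum_of_partition hdisj hcover, ← sum_sub_distrib]
  calc |∑ k, (∑ i ∈ C k, γ i * a i - (∑ i ∈ C k, γ i) * b k)|
      ≤ ∑ k, ∑ i ∈ C k, γ i * |a i - b k| :=
        (abs_sum_le_sum_abs _ _).trans
          (sum_le_sum fun k _ => abs_sum_mul_sub_sum_mul_le _ _ fun i _ => hγ i)
    _ ≤ ∑ k, ∑ i ∈ C k, L * (γ i * δ i k) :=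
        sum_le_sum fun k _ => sum_le_sum fun i _ => by
          rw [mul_left_comm]; exact mul_le_mul_of_nonneg_left (hab i k) (hγ i)
    _ = L * ∑ k, ∑ i ∈ C k, γ i * δ i k := by simp only [mul_sum]

theorem sr_optimality_gap_spdd_bound_general {D S : Type*}
    [NormedAddCommGroup D]
    (Z : Set D) (F : D → S → ℝ)
    {N K : ℕ} (ξ : Fin N → S) (γ : Fin N → ℝ)
    (hγ : ∀ i, 0 < γ i)
    (C : Fin K → Finset (Fin N))
    (hCdisj : ∀ k l, k ≠ l → Disjoint (C k) (C l))
    (hCcover : Finset.univ.biUnion C = Finset.univ)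
    (ζ : Fin K → S)
    (zξ : D) (hzξ : zξ ∈ Z)
    (zζ : D) (hzζ : zζ ∈ Z)
    (hoptζ : ∀ z ∈ Z,
      ∑ k, (∑ i ∈ C k, γ i) * F zζ (ζ k) ≤ ∑ k, (∑ i ∈ C k, γ i) * F z (ζ k))
    (h : ℝ → ℝ) (hmono : Monotone h)
    (M : ℝ) (hM : ∀ z ∈ Z, ‖z‖ ≤ M)
    (d : S → S → ℝ) (hd : ∀ s s' : S, 0 ≤ d s s')
    (hbound : ∀ z ∈ Z, ∀ (i : Fin N) (k : Fin K),
      |F z (ξ i) - F z (ζ k)| ≤ h ‖z‖ * d (ξ i) (ζ k)) :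
    (∑ i, γ i * F zζ (ξ i)) - (∑ i, γ i * F zξ (ξ i))
      ≤ 2 * h M * ∑ k, ∑ i ∈ C k, γ i * d (ξ i) (ζ k) := by
  have approx : ∀ z ∈ Z, |∑ i, γ i * F z (ξ i) - ∑ k, (∑ i ∈ C k, γ i) * F z (ζ k)|
      ≤ h M * ∑ k, ∑ i ∈ C k, γ i * d (ξ i) (ζ k) := fun z hz =>
    abs_weighted_sum_sub_clustered_le (fun i => (hγ i).le) hCdisj hCcover fun i k =>
      (hbound z hz i k).trans (mul_le_mul_of_nonneg_right (hmono (hM z hz)) (hd _ _))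
  have hζ := abs_le.mp (approx zζ hzζ)
  have hξ := abs_le.mp (approx zξ hzξ)
  linarith [hoptζ zξ hzξ]

/-- With `h` nondecreasing, `‖z‖ ≤ M` on `Z`, and
`|F(z, ξ_i) − F(z, ζ_k)| ≤ h(‖z‖) · d(ξ_i, ζ_k)` with `d` nonnegative,
the optimality gap satisfies `OG ≤ 2 h(M) · Σ_k Σ_{i ∈ C_k} γ_i d(ξ_i, ζ_k)`. -/
theorem sr_optimality_gap_spdd_bound {D S : Type*}
    [NormedAddCommGroup D] [NormedSpace ℝ D]
    (Z : Set D) (hZ : Z.Nonempty) (F : D → S → ℝ)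
    {N K : ℕ} (ξ : Fin N → S) (γ : Fin N → ℝ)
    (hγ : ∀ i, 0 < γ i) (hγsum : ∑ i, γ i = 1)
    (C : Fin K → Finset (Fin N))
    (hCne : ∀ k, (C k).Nonempty)
    (hCdisj : ∀ k l, k ≠ l → Disjoint (C k) (C l))
    (hCcover : Finset.univ.biUnion C = Finset.univ)
    (ζ : Fin K → S)
    (zξ : D) (hzξ : zξ ∈ Z)
    (hoptξ : ∀ z ∈ Z, ∑ i, γ i * F zξ (ξ i) ≤ ∑ i, γ i * F z (ξ i))
    (zζ : D) (hzζ : zζ ∈ Z)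
    (hoptζ : ∀ z ∈ Z,
      ∑ k, (∑ i ∈ C k, γ i) * F zζ (ζ k) ≤ ∑ k, (∑ i ∈ C k, γ i) * F z (ζ k))
    (h : ℝ → ℝ) (hmono : Monotone h)
    (M : ℝ) (hM : ∀ z ∈ Z, ‖z‖ ≤ M)
    (d : S → S → ℝ) (hd : ∀ s s' : S, 0 ≤ d s s')
    (hbound : ∀ z ∈ Z, ∀ (i : Fin N) (k : Fin K),
      |F z (ξ i) - F z (ζ k)| ≤ h ‖z‖ * d (ξ i) (ζ k)) :
    (∑ i, γ i * F zζ (ξ i)) - (∑ i, γ i * F zξ (ξ i))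
      ≤ 2 * h M * ∑ k, ∑ i ∈ C k, γ i * d (ξ i) (ζ k) :=
  sr_optimality_gap_spdd_bound_general Z F ξ γ hγ C hCdisj hCcover ζ zξ hzξ zζ hzζ hoptζ h hmono M
    hM d hd hbound
end

section
/- Combined two-sided bound underlying inequality (7): for z*_ξ a minimizer of F(·, ξ) over Z and z*_ζ a minimizer of F(·, ζ) over Z, OG ≤ Σ_{k=1}^K Σ_{i ∈ C_k} γ_i (F(z*_ζ, ξ_i) − F(z*_ζ, ζ_k)) − Σ_{k=1}^K Σ_{i ∈ C_k} γ_i (F(z*_ξ, ξ_i) − F(z*_ξ, ζ_k)), where OG := F(z*_ζ, ξ) − F(z*_ξ, ξ). -/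
/-!
Split the original objective along the clusters: for every decision `z`,
`F(z, ξ) = F(z, ζ) + E(z)` with `E(z) = Σ_k Σ_{i ∈ C_k} γ_i (F(z, ξ_i) − F(z, ζ_k))`.
Hence `OG = E(z*_ζ) − E(z*_ξ) + (F(z*_ζ, ζ) − F(z*_ξ, ζ))`, and the last bracket is
nonpositive because `z*_ζ` minimizes the reduced objective and `z*_ξ` is feasible.
-/

open Finset Function

namespace Finset

variable {ι κ R : Type*} [Fintype ι] [Fintype κ] [DecidableEq ι]

theorem sum_univ_eq_sum_sum_of_partition_s15 [AddCommMonoid R] (C : κ → Finset ι)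
    (hdisj : Pairwise (Disjoint on C)) (hcover : univ.biUnion C = univ) (f : ι → R) :
    ∑ i, f i = ∑ k, ∑ i ∈ C k, f i := by
  rw [← hcover, sum_biUnion (hdisj.set_pairwise _)]

theorem sum_sum_mul_sub_eq_of_partition [Ring R] (C : κ → Finset ι)
    (hdisj : Pairwise (Disjoint on C)) (hcover : univ.biUnion C = univ)
    (γ a : ι → R) (b : κ → R) :
    ∑ k, ∑ i ∈ C k, γ i * (a i - b k) = ∑ i, γ i * a i - ∑ k, (∑ i ∈ C k, γ i) * b k := by
  rw [sum_univ_eq_sum_sum_of_partition_s15 C hdisj hcover, ← sum_sub_distrib]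
  simp only [mul_sub, sum_sub_distrib, sum_mul]

end Finset

theorem sr_optimality_gap_two_sided_bound_general {D S : Type*}
    (Z : Set D) (F : D → S → ℝ)
    {N K : ℕ} (ξ : Fin N → S) (γ : Fin N → ℝ)
    (C : Fin K → Finset (Fin N))
    (hCdisj : ∀ k l, k ≠ l → Disjoint (C k) (C l))
    (hCcover : Finset.univ.biUnion C = Finset.univ)
    (ζ : Fin K → S)
    (zξ : D) (hzξ : zξ ∈ Z)
    (zζ : D)
    (hoptζ : ∀ z ∈ Z,
      ∑ k, (∑ i ∈ C k, γ i) * F zζ (ζ k) ≤ ∑ k, (∑ i ∈ C k, γ i) * F z (ζ k)) :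
    (∑ i, γ i * F zζ (ξ i)) - (∑ i, γ i * F zξ (ξ i))
      ≤ (∑ k, ∑ i ∈ C k, γ i * (F zζ (ξ i) - F zζ (ζ k)))
        - (∑ k, ∑ i ∈ C k, γ i * (F zξ (ξ i) - F zξ (ζ k))) := by
  simp only [sum_sum_mul_sub_eq_of_partition C hCdisj hCcover]
  linarith [hoptζ zξ hzξ]

/-- Combined two-sided bound underlying inequality (7):
`OG ≤ Σ_k Σ_{i ∈ C_k} γ_i (F(z*_ζ, ξ_i) − F(z*_ζ, ζ_k))
     − Σ_k Σ_{i ∈ C_k} γ_i (F(z*_ξ, ξ_i) − F(z*_ξ, ζ_k))`. -/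
theorem sr_optimality_gap_two_sided_bound {D S : Type*}
    [AddCommGroup D] [Module ℝ D]
    (Z : Set D) (hZ : Z.Nonempty) (F : D → S → ℝ)
    {N K : ℕ} (ξ : Fin N → S) (γ : Fin N → ℝ)
    (hγ : ∀ i, 0 < γ i) (hγsum : ∑ i, γ i = 1)
    (C : Fin K → Finset (Fin N))
    (hCne : ∀ k, (C k).Nonempty)
    (hCdisj : ∀ k l, k ≠ l → Disjoint (C k) (C l))
    (hCcover : Finset.univ.biUnion C = Finset.univ)
    (ζ : Fin K → S)
    (zξ : D) (hzξ : zξ ∈ Z)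
    (hoptξ : ∀ z ∈ Z, ∑ i, γ i * F zξ (ξ i) ≤ ∑ i, γ i * F z (ξ i))
    (zζ : D) (hzζ : zζ ∈ Z)
    (hoptζ : ∀ z ∈ Z,
      ∑ k, (∑ i ∈ C k, γ i) * F zζ (ζ k) ≤ ∑ k, (∑ i ∈ C k, γ i) * F z (ζ k)) :
    (∑ i, γ i * F zζ (ξ i)) - (∑ i, γ i * F zξ (ξ i))
      ≤ (∑ k, ∑ i ∈ C k, γ i * (F zζ (ξ i) - F zζ (ζ k)))
        - (∑ k, ∑ i ∈ C k, γ i * (F zξ (ξ i) - F zξ (ζ k))) :=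
  sr_optimality_gap_two_sided_bound_general Z F ξ γ C hCdisj hCcover ζ zξ hzξ zζ hoptζ
end
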